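/- Let n ≥ 1, let X be an n×n positive semidefinite complex matrix, let Y be an n×n Hermitian complex matrix whose eigenvalues all lie in an interval [a, b], and let f : [a, b] → ℝ be monotonically increasing. Then ‖[X, f(Y)]‖₁ ≤ (Tr X)·(f(b) − f(a)). -/

import Mathlib

open scoped ComplexOrder

/-- The trace norm of a complex matrix: `Tr √(Aᴴ A)`, the sum of singular values. -/
noncomputable def traceNorm {n : ℕ} (A : Matrix (Fin n) (Fin n) ℂ) : ℝ :=
  ((Matrix.posSemidef_conjTranspose_mul_self A).1.eigenvectorUnitary.1 *
      Matrix.diagonal (((↑) : ℝ → ℂ) ∘ Real.sqrt ∘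
        (Matrix.posSemidef_conjTranspose_mul_self A).1.eigenvalues) *
      (star (Matrix.posSemidef_conjTranspose_mul_self A).1.eigenvectorUnitary :
        Matrix (Fin n) (Fin n) ℂ)).trace.re

/-- For a Hermitian matrix `Y = Σⱼ yⱼ |φⱼ⟩⟨φⱼ|`, the matrix `f(Y) = Σⱼ f(yⱼ) |φⱼ⟩⟨φⱼ|`
(junk value `0` if `Y` is not Hermitian). -/
noncomputable def matFun {n : ℕ} (f : ℝ → ℝ) (Y : Matrix (Fin n) (Fin n) ℂ) :
    Matrix (Fin n) (Fin n) ℂ :=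
  if hY : Y.IsHermitian then
    (hY.eigenvectorUnitary : Matrix (Fin n) (Fin n) ℂ) *
      Matrix.diagonal (fun i => (f (hY.eigenvalues i) : ℂ)) *
      (star hY.eigenvectorUnitary : Matrix (Fin n) (Fin n) ℂ)
  else 0

/-! Put `c = (f a + f b) / 2`, `e = (f b - f a) / 2` and `B = f(Y) - c`. Then `[X, f(Y)] = [X, B]`,
and monotonicity of `f` gives `B² ≤ e²`. Taking singular vectors, `‖M‖₁ = Σₖ Re ⟪uₖ, M vₖ⟫` for
orthonormal families `u`, `v`. Factor `X = SᴴS`: by Cauchy–Schwarz and Bessel's inequality,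
`Σₖ |⟪uₖ, XB vₖ⟫| = Σₖ |⟪S uₖ, SB vₖ⟫| ≤ ‖S‖₂ ‖SB‖₂ = √(Tr X) √(Tr BXB) ≤ e Tr X`, and since
`BX = (XB)ᴴ` the other half of the commutator obeys the same bound. -/

open scoped MatrixOrder InnerProductSpace
open RCLike WithLp Finset

namespace Matrix

variable {𝕜 : Type*} [RCLike 𝕜] {m ι κ : Type*} [Fintype m] [Fintype ι] [DecidableEq ι] [Fintype κ]

lemma sum_norm_toEuclideanLin_sq_le_re_trace (S : Matrix m ι 𝕜) {u : κ → EuclideanSpace 𝕜 ι}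
    (hu : Orthonormal 𝕜 u) :
    ∑ k, ‖S.toEuclideanLin (u k)‖ ^ 2 ≤ re (Sᴴ * S).trace := by
  set r : m → EuclideanSpace 𝕜 ι := fun j => toLp 2 (star (S j))
  have hSr : ∀ x j, S.toEuclideanLin x j = ⟪r j, x⟫_𝕜 := fun x j => by
    simp [r, EuclideanSpace.inner_eq_star_dotProduct, mulVec, dotProduct, mul_comm]
  have hr : ∀ j, ‖r j‖ ^ 2 = re ((S * Sᴴ) j j) := fun j => by
    simp [r, EuclideanSpace.norm_sq_eq, mul_apply, RCLike.mul_conj]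
  calc ∑ k, ‖S.toEuclideanLin (u k)‖ ^ 2 = ∑ j, ∑ k, ‖⟪u k, r j⟫_𝕜‖ ^ 2 := by
        simp_rw [EuclideanSpace.norm_sq_eq, hSr, norm_inner_symm]
        exact sum_comm
    _ ≤ ∑ j, ‖r j‖ ^ 2 := sum_le_sum fun j _ => hu.sum_inner_products_le (r j)
    _ = re (Sᴴ * S).trace := by simp_rw [hr, trace_mul_comm Sᴴ, trace, map_sum]; rfl

lemma PosSemidef.exists_eq_conjTranspose_mul_self {X : Matrix ι ι 𝕜} (hX : X.PosSemidef) :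
    ∃ S : Matrix ι ι 𝕜, X = Sᴴ * S :=
  ⟨CFC.sqrt X, by
    rw [(nonneg_iff_posSemidef.mp (CFC.sqrt_nonneg X)).isHermitian.eq,
      CFC.sqrt_mul_sqrt_self X hX.nonneg]⟩

lemma inner_toEuclideanLin_conjTranspose [DecidableEq m] (A : Matrix m ι 𝕜)
    (x : EuclideanSpace 𝕜 ι) (y : EuclideanSpace 𝕜 m) :
    ⟪x, Aᴴ.toEuclideanLin y⟫_𝕜 = ⟪A.toEuclideanLin x, y⟫_𝕜 := by
  rw [toEuclideanLin_conjTranspose_eq_adjoint, LinearMap.adjoint_inner_right]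

lemma inner_toEuclideanLin_conjTranspose_mul [DecidableEq m] (S T : Matrix m ι 𝕜)
    (x y : EuclideanSpace 𝕜 ι) :
    ⟪x, (Sᴴ * T).toEuclideanLin y⟫_𝕜 = ⟪S.toEuclideanLin x, T.toEuclideanLin y⟫_𝕜 := by
  rw [toLpLin_mul_same, LinearMap.comp_apply, inner_toEuclideanLin_conjTranspose]

lemma sum_norm_inner_conjTranspose_mul_le [DecidableEq m] (S T : Matrix m ι 𝕜)
    {u v : κ → EuclideanSpace 𝕜 ι} (hu : Orthonormal 𝕜 u) (hv : Orthonormal 𝕜 v) :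
    ∑ k, ‖⟪u k, (Sᴴ * T).toEuclideanLin (v k)⟫_𝕜‖ ≤
      √(re (Sᴴ * S).trace) * √(re (Tᴴ * T).trace) := by
  simp_rw [inner_toEuclideanLin_conjTranspose_mul]
  calc _ ≤ ∑ k, ‖S.toEuclideanLin (u k)‖ * ‖T.toEuclideanLin (v k)‖ :=
        sum_le_sum fun k _ => norm_inner_le_norm _ _
    _ ≤ _ := (Real.sum_mul_le_sqrt_mul_sqrt _ _ _).trans <| mul_le_mul
        (Real.sqrt_le_sqrt (sum_norm_toEuclideanLin_sq_le_re_trace S hu))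
        (Real.sqrt_le_sqrt (sum_norm_toEuclideanLin_sq_le_re_trace T hv))
        (Real.sqrt_nonneg _) (Real.sqrt_nonneg _)

lemma PosSemidef.sum_norm_inner_mul_le {X : Matrix ι ι 𝕜} (hX : X.PosSemidef) (B : Matrix ι ι 𝕜)
    {u v : κ → EuclideanSpace 𝕜 ι} (hu : Orthonormal 𝕜 u) (hv : Orthonormal 𝕜 v) :
    ∑ k, ‖⟪u k, (X * B).toEuclideanLin (v k)⟫_𝕜‖ ≤
      √(re X.trace) * √(re (Bᴴ * X * B).trace) := by
  obtain ⟨S, rfl⟩ := hX.exists_eq_conjTranspose_mul_self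
  simpa only [Matrix.mul_assoc, conjTranspose_mul] using
    sum_norm_inner_conjTranspose_mul_le S (S * B) hu hv

lemma PosSemidef.re_trace_conjTranspose_mul_mul_le {X : Matrix ι ι 𝕜} (hX : X.PosSemidef)
    {B : Matrix ι ι 𝕜} {c : ℝ} (hB : (c • 1 - B * Bᴴ).PosSemidef) :
    re (Bᴴ * X * B).trace ≤ c * re X.trace := by
  obtain ⟨S, rfl⟩ := hX.exists_eq_conjTranspose_mul_self
  have h := (RCLike.nonneg_iff.mp (hB.mul_mul_conjTranspose_same S).trace_nonneg).1
  rw [Matrix.mul_sub, Matrix.sub_mul, trace_sub, map_sub, Matrix.mul_smul, Matrix.smul_mul,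
    trace_smul, Matrix.mul_one, trace_mul_comm S, RCLike.smul_re] at h
  have hcycle : (Bᴴ * (Sᴴ * S) * B).trace = (S * (B * Bᴴ) * Sᴴ).trace := by
    rw [show Bᴴ * (Sᴴ * S) * B = (Bᴴ * Sᴴ) * (S * B) by simp only [Matrix.mul_assoc],
      trace_mul_comm]
    simp only [Matrix.mul_assoc]
  rw [hcycle]
  linarith

lemma IsHermitian.posSemidef_sq_smul_one_sub_cfc_mul_cfc {Y : Matrix ι ι 𝕜} (hY : Y.IsHermitian)
    {g : ℝ → ℝ} {e : ℝ} (hg : ∀ x ∈ spectrum ℝ Y, g x ^ 2 ≤ e ^ 2) :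
    (e ^ 2 • 1 - cfc g Y * cfc g Y).PosSemidef := by
  have hcont : ∀ h : ℝ → ℝ, ContinuousOn h (spectrum ℝ Y) := Y.finite_real_spectrum.continuousOn
  have h : 0 ≤ cfc (fun x => e ^ 2 - g x ^ 2) Y := cfc_nonneg fun x hx => sub_nonneg.mpr (hg x hx)
  rwa [cfc_sub _ _ Y (hcont _) (hcont _), cfc_const _ Y hY.isSelfAdjoint, cfc_pow _ _ Y (hcont _),
    Algebra.algebraMap_eq_smul_one, sq (cfc g Y), nonneg_iff_posSemidef] at h

lemma IsHermitian.toEuclideanLin_eigenvectorBasis {A : Matrix ι ι 𝕜} (hA : A.IsHermitian)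
    (j : ι) :
    A.toEuclideanLin (hA.eigenvectorBasis j) = hA.eigenvalues j • hA.eigenvectorBasis j := by
  ext1
  simp [hA.mulVec_eigenvectorBasis]

lemma inner_toEuclideanLin_eigenvectorBasis_conjTranspose_mul_self [DecidableEq m]
    (M : Matrix m ι 𝕜) (hA : (Mᴴ * M).IsHermitian) (i j : ι) :
    ⟪M.toEuclideanLin (hA.eigenvectorBasis i), M.toEuclideanLin (hA.eigenvectorBasis j)⟫_𝕜 =
      if i = j then (hA.eigenvalues j : 𝕜) else 0 := by
  rw [← inner_toEuclideanLin_conjTranspose_mul, hA.toEuclideanLin_eigenvectorBasis,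
    RCLike.real_smul_eq_coe_smul (K := 𝕜), inner_smul_right,
    orthonormal_iff_ite.mp hA.eigenvectorBasis.orthonormal]
  split_ifs <;> simp

end Matrix

open Matrix

lemma traceNorm_eq_sum_sqrt_eigenvalues {n : ℕ} (M : Matrix (Fin n) (Fin n) ℂ) :
    traceNorm M = ∑ i, √((isHermitian_conjTranspose_mul_self M).eigenvalues i) := by
  rw [traceNorm, trace_mul_cycle, UnitaryGroup.star_mul_self, Matrix.one_mul, trace_diagonal,
    Complex.re_sum]
  simp

lemma exists_orthonormal_traceNorm_eq_sum_re_inner {n : ℕ} (M : Matrix (Fin n) (Fin n) ℂ) :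
    ∃ (s : Finset (Fin n)) (u v : s → EuclideanSpace ℂ (Fin n)), Orthonormal ℂ u ∧
      Orthonormal ℂ v ∧ traceNorm M = ∑ k, re ⟪u k, M.toEuclideanLin (v k)⟫_ℂ := by
  have hA := isHermitian_conjTranspose_mul_self M
  set σ : Fin n → ℝ := fun i => √(hA.eigenvalues i)
  have hσ : ∀ i, (σ i : ℂ) * σ i = hA.eigenvalues i := fun i => by
    rw [← Complex.ofReal_mul, Real.mul_self_sqrt (eigenvalues_conjTranspose_mul_self_nonneg M i)]
  have hMv := inner_toEuclideanLin_eigenvectorBasis_conjTranspose_mul_self M hA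
  refine ⟨univ.filter (σ · ≠ 0), fun i => (σ i : ℂ)⁻¹ • M.toEuclideanLin (hA.eigenvectorBasis i),
    fun i => hA.eigenvectorBasis i, ?_,
    hA.eigenvectorBasis.orthonormal.comp _ Subtype.val_injective, ?_⟩
  · rw [orthonormal_iff_ite]
    rintro ⟨i, hi⟩ ⟨j, hj⟩
    rw [inner_smul_left, inner_smul_right, hMv]
    by_cases hij : i = j
    · subst hij
      have : (σ i : ℂ) ≠ 0 := by exact_mod_cast (mem_filter.mp hi).2
      simp [← hσ]
      field_simp
    · simp [hij]
  · rw [traceNorm_eq_sum_sqrt_eigenvalues, ← sum_filter_ne_zero, ← sum_coe_sort]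
    refine sum_congr rfl fun ⟨i, hi⟩ _ => ?_
    have : (σ i : ℂ) ≠ 0 := by exact_mod_cast (mem_filter.mp hi).2
    rw [inner_smul_left, hMv, if_pos rfl]
    change σ i = re (starRingEnd ℂ (σ i : ℂ)⁻¹ * (hA.eigenvalues i : ℂ))
    rw [← hσ, ← mul_assoc, map_inv₀, Complex.conj_ofReal, inv_mul_cancel₀ this, one_mul]
    simp

lemma traceNorm_commutator_le {n : ℕ} {X B : Matrix (Fin n) (Fin n) ℂ} (hX : X.PosSemidef)
    (hB : B.IsHermitian) {e : ℝ} (he : 0 ≤ e) (hBe : (e ^ 2 • 1 - B * B).PosSemidef) :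
    traceNorm (X * B - B * X) ≤ 2 * e * re X.trace := by
  obtain ⟨s, u, v, hu, hv, htn⟩ := exists_orthonormal_traceNorm_eq_sum_re_inner (X * B - B * X)
  have hswap : ∀ k, re ⟪u k, (B * X).toEuclideanLin (v k)⟫_ℂ =
      re ⟪v k, (X * B).toEuclideanLin (u k)⟫_ℂ := fun k => by
    rw [show B * X = (X * B)ᴴ by rw [conjTranspose_mul, hB.eq, hX.isHermitian.eq],
      inner_toEuclideanLin_conjTranspose, inner_re_symm]
  have hT : 0 ≤ re X.trace := (RCLike.nonneg_iff.mp hX.trace_nonneg).1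
  have hK : √(re (Bᴴ * X * B).trace) ≤ e * √(re X.trace) := by
    rw [← Real.sqrt_sq he, ← Real.sqrt_mul (sq_nonneg e)]
    exact Real.sqrt_le_sqrt (hX.re_trace_conjTranspose_mul_mul_le (by rwa [hB.eq]))
  have hnre : ∀ z : ℂ, -re z ≤ ‖z‖ := fun z => (neg_le_abs _).trans (abs_re_le_norm z)
  calc traceNorm (X * B - B * X)
      = ∑ k, re ⟪u k, (X * B).toEuclideanLin (v k)⟫_ℂ
          - ∑ k, re ⟪v k, (X * B).toEuclideanLin (u k)⟫_ℂ := by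
        simp_rw [htn, map_sub, LinearMap.sub_apply, inner_sub_right, map_sub, hswap,
          sum_sub_distrib]
    _ ≤ ∑ k, ‖⟪u k, (X * B).toEuclideanLin (v k)⟫_ℂ‖
          + ∑ k, ‖⟪v k, (X * B).toEuclideanLin (u k)⟫_ℂ‖ := by
        rw [sub_eq_add_neg, ← sum_neg_distrib]
        exact add_le_add (sum_le_sum fun k _ => re_le_norm _) (sum_le_sum fun k _ => hnre _)
    _ ≤ √(re X.trace) * √(re (Bᴴ * X * B).trace) + √(re X.trace) * √(re (Bᴴ * X * B).trace) :=
        add_le_add (hX.sum_norm_inner_mul_le B hu hv) (hX.sum_norm_inner_mul_le B hv hu)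
    _ ≤ 2 * e * re X.trace := by
        have := mul_le_mul_of_nonneg_left hK (Real.sqrt_nonneg (re X.trace))
        nlinarith [Real.mul_self_sqrt hT]

lemma MonotoneOn.sq_sub_midpoint_le {f : ℝ → ℝ} {a b x : ℝ} (hf : MonotoneOn f (Set.Icc a b))
    (hx : x ∈ Set.Icc a b) : (f x - (f a + f b) / 2) ^ 2 ≤ ((f b - f a) / 2) ^ 2 := by
  have hab : a ≤ b := hx.1.trans hx.2
  have hlo := hf ⟨le_rfl, hab⟩ hx hx.1
  have hhi := hf hx ⟨hab, le_rfl⟩ hx.2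
  exact sq_le_sq' (by linarith) (by linarith)

lemma matFun_eq_cfc {n : ℕ} (f : ℝ → ℝ) {Y : Matrix (Fin n) (Fin n) ℂ} (hY : Y.IsHermitian) :
    matFun f Y = cfc f Y := by
  rw [matFun, dif_pos hY, hY.cfc_eq]
  rfl

theorem trace_norm_commutator_le_trace_mul {n : ℕ} (hn : 1 ≤ n)
    (X Y : Matrix (Fin n) (Fin n) ℂ) (hX : X.PosSemidef) (hY : Y.IsHermitian)
    (a b : ℝ) (hspec : ∀ i, hY.eigenvalues i ∈ Set.Icc a b)
    (f : ℝ → ℝ) (hf : MonotoneOn f (Set.Icc a b)) :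
    traceNorm (X * matFun f Y - matFun f Y * X) ≤ X.trace.re * (f b - f a) := by
  have hab : a ≤ b := (hspec ⟨0, hn⟩).1.trans (hspec ⟨0, hn⟩).2
  set c := (f a + f b) / 2
  set B := cfc (fun x => f x - c) Y
  have hFB : matFun f Y = B + algebraMap ℝ _ c := by
    rw [matFun_eq_cfc f hY, ← cfc_const c Y, ← cfc_add Y _ _
      (Y.finite_real_spectrum.continuousOn _) (Y.finite_real_spectrum.continuousOn _)]
    simp only [sub_add_cancel]
  have hBe : (((f b - f a) / 2) ^ 2 • 1 - B * B).PosSemidef := by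
    refine hY.posSemidef_sq_smul_one_sub_cfc_mul_cfc fun x hx => ?_
    rw [hY.spectrum_real_eq_range_eigenvalues] at hx
    obtain ⟨i, rfl⟩ := hx
    exact hf.sq_sub_midpoint_le (hspec i)
  calc traceNorm (X * matFun f Y - matFun f Y * X) = traceNorm (X * B - B * X) := by
        rw [hFB, mul_add, add_mul, Algebra.commutes, add_sub_add_right_eq_sub]
    _ ≤ 2 * ((f b - f a) / 2) * re X.trace :=
        traceNorm_commutator_le hX (cfc_predicate (p := IsSelfAdjoint) _ Y).isHermitian
          (by linarith [hf ⟨le_rfl, hab⟩ ⟨hab, le_rfl⟩ hab]) hBe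
    _ = X.trace.re * (f b - f a) := by
        rw [RCLike.re_to_complex]
        ring
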